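/- For every integer n ≥ 0, every real N > 0 and every real X: C_n^N(X) = ((N)_{n/2}/n!) · ∫_0^∞ H_n(X√b) · γ_{N+n/2}(b) db, where (N)_{n/2} := Γ(N+n/2)/Γ(N). -/
import Mathlib

open Finset Polynomial MeasureTheory

/-- The Gegenbauer polynomial `C_n^N(X)` (real parameter and argument). -/
noncomputable def Geg (n : ℕ) (N X : ℝ) : ℝ :=
  ∑ k ∈ Finset.range (n / 2 + 1),
    (-1) ^ k * ((ascPochhammer ℝ (n - k)).eval N /
      (((n - 2 * k).factorial : ℝ) * (k.factorial : ℝ))) * (2 * X) ^ (n - 2 * k)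

/-- The (physicists') Hermite polynomial `H_n(X)`. -/
noncomputable def Hpoly (n : ℕ) (X : ℝ) : ℝ :=
  (n.factorial : ℝ) *
    ∑ k ∈ Finset.range (n / 2 + 1),
      (-1) ^ k / ((k.factorial : ℝ) * ((n - 2 * k).factorial : ℝ)) * (2 * X) ^ (n - 2 * k)

/-- The Gamma density with shape parameter `a`, `γ_a(b) = e^(-b) b^(a-1) / Γ(a)` on `(0,∞)`. -/
noncomputable def gammaPdf (a b : ℝ) : ℝ :=
  Real.exp (-b) * b ^ (a - 1) / Real.Gamma a

lemma asc_eval_gamma (N : ℝ) (hN : 0 < N) (m : ℕ) :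
    (ascPochhammer ℝ m).eval N = Real.Gamma (N + m) / Real.Gamma N := by
  induction m with
  | zero =>
      simp [div_self (Real.Gamma_pos_of_pos hN).ne']
  | succ m ih =>
      have h1 : (0:ℝ) < N + m := by positivity
      have : N + ((m : ℝ) + 1) = (N + m) + 1 := by ring
      rw [ascPochhammer_succ_right]
      push_cast
      rw [this, Real.Gamma_add_one h1.ne']
      simp [ih]
      ring

lemma geq_eq_on (a : ℝ) (m : ℕ) :
    Set.EqOn (fun b => (Real.sqrt b) ^ m * gammaPdf a b)
      (fun b => (Real.exp (-b) * b ^ (a + m / 2 - 1)) / Real.Gamma a) (Set.Ioi 0) := by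
  intro b hb
  have hb : (0:ℝ) < b := hb
  simp only [gammaPdf]
  have h1 : (Real.sqrt b) ^ m = b ^ ((m : ℝ) / 2) := by
    rw [Real.sqrt_eq_rpow, ← Real.rpow_natCast (b ^ ((1:ℝ)/2)) m, ← Real.rpow_mul hb.le]
    ring_nf
  have h2 : b ^ ((m : ℝ) / 2) * b ^ (a - 1) = b ^ (a + m / 2 - 1) := by
    rw [← Real.rpow_add hb]
    ring_nf
  rw [h1, show Real.exp (-b) * b ^ (a + (m:ℝ) / 2 - 1) = Real.exp (-b) * (b ^ ((m:ℝ)/2) * b ^ (a-1)) from by rw [h2]]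
  ring

lemma integrable_sqrt_pow (a : ℝ) (ha : 0 < a) (m : ℕ) :
    IntegrableOn (fun b => (Real.sqrt b) ^ m * gammaPdf a b) (Set.Ioi 0) := by
  have ha2 : (0:ℝ) < a + m / 2 := by positivity
  refine (integrableOn_congr_fun (geq_eq_on a m) measurableSet_Ioi).mpr ?_
  exact (Real.GammaIntegral_convergent ha2).div_const _

lemma integral_sqrt_pow (a : ℝ) (ha : 0 < a) (m : ℕ) :
    ∫ b in Set.Ioi (0:ℝ), (Real.sqrt b) ^ m * gammaPdf a b
      = Real.Gamma (a + m / 2) / Real.Gamma a := by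
  have ha2 : (0:ℝ) < a + m / 2 := by positivity
  rw [setIntegral_congr_fun measurableSet_Ioi (geq_eq_on a m), integral_div,
    ← Real.Gamma_eq_integral ha2]

/-- Subordination: `C_n^N(X) = ((N)_(n/2)/n!) ∫_0^∞ H_n(X√b) γ_(N+n/2)(b) db`,
where `(N)_(n/2) = Γ(N+n/2)/Γ(N)`. -/
theorem gegenbauer_subordination (n : ℕ) (N : ℝ) (hN : 0 < N) (X : ℝ) :
    Geg n N X =
      (Real.Gamma (N + (n : ℝ) / 2) / Real.Gamma N) / (n.factorial : ℝ) *
        ∫ b in Set.Ioi (0 : ℝ), Hpoly n (X * Real.sqrt b) * gammaPdf (N + (n : ℝ) / 2) b := by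
  set a : ℝ := N + (n : ℝ) / 2 with ha_def
  have ha : 0 < a := by positivity
  have step1 : ∀ b : ℝ, Hpoly n (X * Real.sqrt b) * gammaPdf a b
      = ∑ k ∈ Finset.range (n / 2 + 1),
          ((n.factorial : ℝ) * ((-1) ^ k / ((k.factorial : ℝ) * ((n - 2 * k).factorial : ℝ)))
            * (2 * X) ^ (n - 2 * k)) * ((Real.sqrt b) ^ (n - 2 * k) * gammaPdf a b) := by
    intro b
    simp only [Hpoly, Finset.mul_sum, Finset.sum_mul]
    refine Finset.sum_congr rfl fun k _ => ?_
    have : 2 * (X * Real.sqrt b) = (2 * X) * Real.sqrt b := by ring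
    rw [this, mul_pow]
    ring
  rw [show (fun b => Hpoly n (X * Real.sqrt b) * gammaPdf a b)
      = fun b => ∑ k ∈ Finset.range (n / 2 + 1),
          ((n.factorial : ℝ) * ((-1) ^ k / ((k.factorial : ℝ) * ((n - 2 * k).factorial : ℝ)))
            * (2 * X) ^ (n - 2 * k)) * ((Real.sqrt b) ^ (n - 2 * k) * gammaPdf a b)
      from funext step1]
  rw [integral_finset_sum _ fun k _ => ((integrable_sqrt_pow a ha (n - 2 * k)).const_mul _)]
  rw [Finset.mul_sum, Geg]
  refine Finset.sum_congr rfl fun k hk => ?_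
  rw [MeasureTheory.integral_const_mul, integral_sqrt_pow a ha (n - 2 * k)]
  have hk2 : 2 * k ≤ n := by
    have := Finset.mem_range.mp hk
    omega
  have hcast : a + ((n - 2 * k : ℕ) : ℝ) / 2 = N + ((n - k : ℕ) : ℝ) := by
    have h1 : ((n - 2 * k : ℕ) : ℝ) = (n : ℝ) - 2 * k := by
      push_cast [hk2]; ring
    have h2 : ((n - k : ℕ) : ℝ) = (n : ℝ) - k := by
      push_cast [show k ≤ n by omega]; ring
    rw [h1, h2, ha_def]; ring
  rw [hcast, asc_eval_gamma N hN (n - k)]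
  have hΓN : Real.Gamma N ≠ 0 := (Real.Gamma_pos_of_pos hN).ne'
  have hΓa : Real.Gamma a ≠ 0 := (Real.Gamma_pos_of_pos ha).ne'
  have hfn : (n.factorial : ℝ) ≠ 0 := Nat.cast_ne_zero.mpr n.factorial_ne_zero
  have hfk : (k.factorial : ℝ) ≠ 0 := Nat.cast_ne_zero.mpr k.factorial_ne_zero
  have hfnk : ((n - 2 * k).factorial : ℝ) ≠ 0 := Nat.cast_ne_zero.mpr (n - 2 * k).factorial_ne_zero
  field_simp
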